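/- (Bound (34c).) Let β > 0, ε > 0, L > 0, T_Δ a positive natural number, and ω_Q, ω_q ≥ 0. Let q_n, q̂_n, Q_b, Q̂_b be real numbers with |q_n − q̂_n| ≤ T_Δ·ω_q and |Q_b − Q̂_b| ≤ T_Δ·ω_Q. Define v(c) := min(max(ε·c/(2·β), 0), L) and G(v, c) := (β/ε)·v² − c·v. Then |G(v(q̂_n − Q̂_b), q_n − Q_b) − G(v(q_n − Q_b), q_n − Q_b)| ≤ (ε/(2·β))·(T_Δ·ω_Q + T_Δ·ω_q)². -/
import Mathlib
set_option maxHeartbeats 800000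


/-- The quadratic queue-price routing objective `G(v, c) = (β/ε)·v² − c·v`. -/
noncomputable def qpObjective (β ε v c : ℝ) : ℝ := (β / ε) * v ^ 2 - c * v

/-- The clamped minimizer `v(c) = clamp(ε·c/(2·β); [0, L])`. -/
noncomputable def qpMinimizer (β ε L c : ℝ) : ℝ := min (max (ε * c / (2 * β)) 0) L

/-- Projection inequality for clamping to `[0, L]`. -/
lemma clamp_proj (L m w : ℝ) (hL : 0 ≤ L) (hw0 : 0 ≤ w) (hwL : w ≤ L) :
    (m - min (max m 0) L) * (w - min (max m 0) L) ≤ 0 := by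
  rcases le_total m 0 with h0 | h0
  · rw [max_eq_right h0, min_eq_left hL]
    nlinarith
  · rw [max_eq_left h0]
    rcases le_total m L with h1 | h1
    · rw [min_eq_left h1]; nlinarith
    · rw [min_eq_right h1]; nlinarith

/-- Bound (34c): optimality loss of the routing objective `f₃` caused by
using the window-start backlog approximations. -/
theorem routing_objective_loss_bound_v
    (β ε L : ℝ) (hβ : 0 < β) (hε : 0 < ε) (hL : 0 < L)
    (TΔ : ℕ) (hTΔ : 0 < TΔ)
    (ωQ ωq : ℝ) (hωQ : 0 ≤ ωQ) (hωq : 0 ≤ ωq)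
    (qn qnhat Qb Qbhat : ℝ)
    (hqn : |qn - qnhat| ≤ (TΔ : ℝ) * ωq)
    (hQb : |Qb - Qbhat| ≤ (TΔ : ℝ) * ωQ) :
    |qpObjective β ε (qpMinimizer β ε L (qnhat - Qbhat)) (qn - Qb)
        - qpObjective β ε (qpMinimizer β ε L (qn - Qb)) (qn - Qb)|
      ≤ (ε / (2 * β)) * ((TΔ : ℝ) * ωQ + (TΔ : ℝ) * ωq) ^ 2 := by
  set c : ℝ := qn - Qb with hc
  set ch : ℝ := qnhat - Qbhat with hch
  set m : ℝ := ε * c / (2 * β) with hm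
  set mh : ℝ := ε * ch / (2 * β) with hmh
  set p : ℝ := min (max m 0) L with hp
  set ph : ℝ := min (max mh 0) L with hph
  have hL0 : 0 ≤ L := hL.le
  have hp0 : 0 ≤ p := le_min (le_max_right _ _) hL0
  have hpL : p ≤ L := min_le_right _ _
  have hph0 : 0 ≤ ph := le_min (le_max_right _ _) hL0
  have hphL : ph ≤ L := min_le_right _ _
  have proj1 : (m - p) * (ph - p) ≤ 0 := clamp_proj L m ph hL0 hph0 hphL
  have proj2 : (mh - ph) * (p - ph) ≤ 0 := clamp_proj L mh p hL0 hp0 hpL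
  set D : ℝ := (TΔ : ℝ) * ωQ + (TΔ : ℝ) * ωq with hD
  have hD0 : 0 ≤ D := by positivity
  -- |ch - c| ≤ D
  have hcc : |ch - c| ≤ D := by
    have : ch - c = (Qb - Qbhat) - (qn - qnhat) := by ring
    rw [this]
    calc |(Qb - Qbhat) - (qn - qnhat)| ≤ |Qb - Qbhat| + |qn - qnhat| := abs_sub _ _
      _ ≤ D := by rw [hD]; linarith
  have hmm : (mh - m) ^ 2 ≤ (ε / (2 * β)) ^ 2 * D ^ 2 := by
    have h1 : mh - m = (ε / (2 * β)) * (ch - c) := by rw [hm, hmh]; ring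
    have h2 : (ch - c) ^ 2 ≤ D ^ 2 := by
      have := abs_le.mp hcc
      exact sq_le_sq' this.1 this.2
    rw [h1, mul_pow]
    exact mul_le_mul_of_nonneg_left h2 (by positivity)
  -- rewrite objectives via completing the square
  have hεne : ε ≠ 0 := hε.ne'
  have hβne : β ≠ 0 := hβ.ne'
  have hG : ∀ v : ℝ, qpObjective β ε v c
      = (β / ε) * (v - m) ^ 2 - (β / ε) * m ^ 2 := by
    intro v
    rw [qpObjective, hm]
    field_simp
    ring
  have key : qpObjective β ε ph c - qpObjective β ε p c
      = (β / ε) * ((ph - m) ^ 2 - (p - m) ^ 2) := by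
    rw [hG, hG]; ring
  have ha : 0 < β / ε := by positivity
  have nonneg : 0 ≤ (ph - m) ^ 2 - (p - m) ^ 2 := by nlinarith [proj1]
  have upper : (ph - m) ^ 2 - (p - m) ^ 2 ≤ (mh - m) ^ 2 := by nlinarith [proj2, sq_nonneg (p - ph + (mh - m))]
  have hdiff0 : 0 ≤ qpObjective β ε ph c - qpObjective β ε p c := by
    rw [key]; exact mul_nonneg ha.le nonneg
  have habs : |qpObjective β ε ph c - qpObjective β ε p c|
      = qpObjective β ε ph c - qpObjective β ε p c := abs_of_nonneg hdiff0
  have hfinal : (β / ε) * ((ph - m) ^ 2 - (p - m) ^ 2)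
      ≤ (ε / (2 * β)) * D ^ 2 := by
    have h3 : (β / ε) * ((ph - m) ^ 2 - (p - m) ^ 2) ≤ (β / ε) * ((ε / (2 * β)) ^ 2 * D ^ 2) :=
      mul_le_mul_of_nonneg_left (le_trans upper hmm) ha.le
    have h4 : (β / ε) * ((ε / (2 * β)) ^ 2 * D ^ 2) = (ε / (4 * β)) * D ^ 2 := by
      field_simp; ring
    have h5 : (ε / (4 * β)) * D ^ 2 ≤ (ε / (2 * β)) * D ^ 2 := by
      apply mul_le_mul_of_nonneg_right _ (by positivity)
      rw [div_le_div_iff₀ (by positivity) (by positivity)]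
      nlinarith
    linarith
  show |qpObjective β ε ph c - qpObjective β ε p c| ≤ (ε / (2 * β)) * D ^ 2
  rw [habs, key]
  exact hfinal
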